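/- Let E = ℝ^d with the Euclidean norm, let W ⊆ ℝ^d be nonempty compact convex, let σ > 0, and let f_1,…,f_T : W → ℝ be σ-strongly convex. Let w_1,…,w_T ∈ W, let g_t be a subgradient of f_t at w_t, and let P be the passed rounds of the Top-k Filter with parameter k applied to g_1,…,g_T. Fix S ⊆ [T] with T − |S| ≤ k and u ∈ W, let g_t^u be a subgradient of f_t at u for each t, and set G̃(u,S) = 2G(S) + max{‖g_t^u‖_2 : t ∈ [T], ‖g_t‖_2 ≤ 2G(S)}. Suppose the predictions satisfy the online gradient descent guarantee for strongly convex losses on the passed rounds: Σ_{t∈P} ⟨w_t − u, g_t⟩ ≤ (1/2)·Σ_{t∈P} ‖g_t‖_2²/(σt) + (σ/2)·Σ_{t∈P} ‖w_t − u‖_2². Then the robust regret satisfies Σ_{t∈S} (f_t(w_t) − f_t(u)) ≤ (2G(S)²/σ)·(ln T + 1) + (5·G̃(u,S)²/(2σ))·(k+1). -/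

import Mathlib

/-!
Top-k Filter in Euclidean space: rounds are indexed `0, 1, …, T-1`.  For round `t`,
`topkThresh g k t` is the `(k+1)`-th largest value among `‖g 0‖₂, …, ‖g t‖₂`
(`0` if fewer than `k+1` values are available).  Round `t` is passed iff
`‖g t‖₂ ≤ 2 * topkThresh g k t`.
-/

/-- The `(k+1)`-th largest element of a list of reals (`0` if the list has fewer
than `k+1` elements). -/
noncomputable def kthLargest (k : ℕ) (l : List ℝ) : ℝ :=
  (l.mergeSort (fun a b => decide (b ≤ a))).getD k 0

/-- `m_t`: the `(k+1)`-th largest value among `‖g 0‖₂, …, ‖g t‖₂`. -/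
noncomputable def topkThresh {d : ℕ} (g : ℕ → EuclideanSpace ℝ (Fin d)) (k t : ℕ) : ℝ :=
  kthLargest k ((List.range (t + 1)).map fun s => ‖g s‖)

/-- The set of rounds in `{0, …, T-1}` passed on to ALG by the Top-k Filter. -/
noncomputable def topkPassed {d : ℕ} (g : ℕ → EuclideanSpace ℝ (Fin d)) (k T : ℕ) :
    Finset ℕ :=
  (Finset.range T).filter fun t => ‖g t‖ ≤ 2 * topkThresh g k t

/-- `G(S) = max_{t ∈ S} ‖g t‖₂` (with `G(∅) = 0`). -/
noncomputable def gradMax {d : ℕ} (g : ℕ → EuclideanSpace ℝ (Fin d)) (S : Finset ℕ) : ℝ :=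
  ((S.sup fun t => ‖g t‖₊ : NNReal) : ℝ)

/-!
Put `G = G(S)`. At most `k` rounds lie outside `S`, and only they can have gradients larger
than `G`; hence every threshold satisfies `m_t ≤ G` and every passed round has `‖g_t‖ ≤ 2G`.
On the passed rounds the OGD guarantee bounds the linearised regret by
`(2G)² / (2σ) · H_T ≤ 2G² / σ · (ln T + 1)`; the at most `k` passed rounds outside `S` are
removed again at a cost of at most `‖g_t^u‖² / (2σ)` each, by strong convexity at `u`.
A rejected round of `S` has regret at most `‖g_t‖² / (2σ)` and satisfies `2 m_t < ‖g_t‖ ≤ G`.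
Sorting these rounds into dyadic levels `‖g_t‖ ∈ (G / 2^(i+1), G / 2^i]`, a level cannot hold
`k + 1` of them, since then the last one would see `m_t ≥ G / 2^(i+1)` and be passed; so their
squared gradients sum to at most `k G² ∑ 4^(-i) = (4/3) k G²`.
-/

open Finset

namespace List

theorem SortedGE.succ_le_countP_iff {α : Type*} [Preorder α] {l : List α} (hl : l.SortedGE)
    {p : α → Bool} (hp : ∀ x y, x ≤ y → p x → p y) {k : ℕ} (hk : k < l.length) :
    k + 1 ≤ l.countP p ↔ p l[k] := by
  constructor
  · intro h
    by_contra hpk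
    have hdrop : (l.drop k).countP p = 0 := by
      rw [countP_eq_zero]
      intro x hx hpx
      obtain ⟨i, hi, rfl⟩ := mem_drop_iff_getElem.mp hx
      exact hpk (hp _ _ (hl.getElem_ge_getElem_of_le (by omega)) hpx)
    have htake := countP_le_length (p := p) (l := l.take k)
    rw [← l.take_append_drop k, countP_append, hdrop] at h
    rw [length_take] at htake
    omega
  · intro hpk
    have htake : (l.take (k + 1)).countP p = k + 1 := by
      rw [countP_eq_length.mpr, length_take]; · omega
      intro x hx
      obtain ⟨i, hi, rfl⟩ := mem_take_iff_getElem.mp hx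
      exact hp _ _ (hl.getElem_ge_getElem_of_le (by omega)) hpk
    exact htake ▸ (take_sublist _ _).countP_le

theorem countP_range (n : ℕ) (p : ℕ → Bool) :
    (List.range n).countP p = #{s ∈ Finset.range n | p s} := by
  simp [Finset.card_def, Finset.filter_val, Finset.range_val, Multiset.range,
    List.countP_eq_length_filter]

end List

section KthLargest

variable {k : ℕ} {l : List ℝ}

theorem kthLargest_nonneg (h : ∀ x ∈ l, 0 ≤ x) : 0 ≤ kthLargest k l := by
  rw [kthLargest, List.getD_eq_getElem?_getD]
  cases hx : (l.mergeSort _)[k]? with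
  | none => rfl
  | some x => exact h x ((List.mergeSort_perm _ _).subset (List.mem_of_getElem? hx))

theorem kthLargest_le {B : ℝ} (hB : 0 ≤ B) (h : l.countP (fun x => B < x) ≤ k) :
    kthLargest k l ≤ B := by
  rw [kthLargest]
  by_cases hk : k < (l.mergeSort fun a b => decide (b ≤ a)).length
  · rw [List.getD_eq_getElem _ _ hk]
    by_contra hlt
    have := ((List.sortedGE_mergeSort (l := l)).succ_le_countP_iff (p := fun x => B < x)
      (fun _ _ hxy h => decide_eq_true ((of_decide_eq_true h).trans_le hxy)) hk).mpr
      (decide_eq_true (not_le.mp hlt))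
    rw [(List.mergeSort_perm _ _).countP_eq] at this
    omega
  · rwa [List.getD_eq_default _ _ (not_lt.mp hk)]

theorem le_kthLargest {v : ℝ} (h : k + 1 ≤ l.countP (fun x => v ≤ x)) : v ≤ kthLargest k l := by
  have hperm := List.mergeSort_perm l fun a b => decide (b ≤ a)
  have hk : k < (l.mergeSort fun a b => decide (b ≤ a)).length := by
    have := l.countP_le_length (p := fun x => v ≤ x)
    rw [hperm.length_eq]; omega
  rw [kthLargest, List.getD_eq_getElem _ _ hk]
  refine of_decide_eq_true (((List.sortedGE_mergeSort (l := l)).succ_le_countP_iff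
    (p := fun x => v ≤ x) (fun _ _ hxy h => decide_eq_true ((of_decide_eq_true h).trans hxy))
    hk).mp ?_)
  rwa [hperm.countP_eq]

end KthLargest

theorem norm_le_coe_sup_nnnorm {ι E : Type*} [SeminormedAddGroup E] {s : Finset ι} {x : ι → E}
    {i : ι} (hi : i ∈ s) : ‖x i‖ ≤ ((s.sup fun j => ‖x j‖₊ : NNReal) : ℝ) := by
  rw [← coe_nnnorm, NNReal.coe_le_coe]
  exact le_sup (f := fun j => ‖x j‖₊) hi

theorem two_pow_log_floor_le_and_lt {r : ℝ} (hr : 1 ≤ r) :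
    2 ^ Nat.log 2 ⌊r⌋₊ ≤ r ∧ r < 2 ^ (Nat.log 2 ⌊r⌋₊ + 1) := by
  have hlog := Int.log_of_one_le_right 2 hr
  have hle := Int.zpow_log_le_self (b := 2) one_lt_two (one_pos.trans_le hr)
  have hlt := Int.lt_zpow_succ_log_self (b := 2) one_lt_two r
  rw [hlog] at hle hlt
  exact ⟨by exact_mod_cast hle, by exact_mod_cast hlt⟩

theorem sum_pow_le_of_card_fiber_le {ι : Type*} (s : Finset ι) (ℓ : ι → ℕ) {N : ℕ}
    (hN : ∀ i, #{t ∈ s | ℓ t = i} ≤ N) {r : ℝ} (hr₀ : 0 ≤ r) (hr₁ : r < 1) :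
    ∑ t ∈ s, r ^ ℓ t ≤ N / (1 - r) := by
  rw [sum_comp (fun i => r ^ i) ℓ, div_eq_mul_inv, ← tsum_geometric_of_lt_one hr₀ hr₁]
  calc ∑ i ∈ s.image ℓ, #{t ∈ s | ℓ t = i} • r ^ i ≤ ∑ i ∈ s.image ℓ, N * r ^ i := by
        gcongr with i
        rw [nsmul_eq_mul]
        exact mul_le_mul_of_nonneg_right (by exact_mod_cast hN i) (by positivity)
    _ ≤ N * ∑' i, r ^ i := by
        rw [← mul_sum]
        gcongr
        exact (summable_geometric_of_lt_one hr₀ hr₁).sum_le_tsum _ fun i _ => by positivity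

theorem sum_sq_norm_div_le_log {E : Type*} [SeminormedAddGroup E] {P : Finset ℕ} {T : ℕ}
    (hP : P ⊆ range T) {x : ℕ → E} {c σ : ℝ} (hσ : 0 < σ) (hx : ∀ t ∈ P, ‖x t‖ ≤ c) :
    ∑ t ∈ P, ‖x t‖ ^ 2 / (σ * (t + 1)) ≤ c ^ 2 / σ * (Real.log T + 1) := by
  calc ∑ t ∈ P, ‖x t‖ ^ 2 / (σ * (t + 1)) ≤ ∑ t ∈ P, c ^ 2 / σ * (1 / (t + 1)) := by
        refine sum_le_sum fun t ht => ?_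
        rw [div_mul_div_comm, mul_one]
        gcongr
        exact hx t ht
    _ ≤ ∑ t ∈ range T, c ^ 2 / σ * (1 / (t + 1)) :=
        sum_le_sum_of_subset_of_nonneg hP fun _ _ _ => by positivity
    _ = c ^ 2 / σ * harmonic T := by simp [harmonic, mul_sum]
    _ ≤ c ^ 2 / σ * (Real.log T + 1) := by
        gcongr
        linarith [harmonic_le_one_add_log T]

theorem sum_le_sum_add_card_mul_add_sum {ι : Type*} [DecidableEq ι] {S P : Finset ι}
    {r a : ι → ℝ} {B : ℝ} {k : ℕ} (hB : 0 ≤ B) (hra : ∀ t ∈ S ∩ P, r t ≤ a t)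
    (ha : ∀ t ∈ P \ S, -a t ≤ B) (hk : #(P \ S) ≤ k) :
    ∑ t ∈ S, r t ≤ ∑ t ∈ P, a t + k * B + ∑ t ∈ S \ P, r t := by
  have hPS : -∑ t ∈ P \ S, a t ≤ k * B := by
    rw [← sum_neg_distrib]
    refine (sum_le_card_nsmul _ _ B ha).trans ?_
    rw [nsmul_eq_mul]
    gcongr
  rw [← sum_inter_add_sum_sdiff S P, ← sum_inter_add_sum_sdiff P S a, inter_comm P S]
  linarith [sum_le_sum hra]

section StrongSubgradient

variable {E : Type*} [NormedAddCommGroup E] [InnerProductSpace ℝ E]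

def IsStrongSubgradientOn (W : Set E) (σ : ℝ) (f : E → ℝ) (x g : E) : Prop :=
  ∀ y ∈ W, f x + inner ℝ (y - x) g + σ / 2 * ‖y - x‖ ^ 2 ≤ f y

theorem IsStrongSubgradientOn.sub_le {W : Set E} {σ : ℝ} {f : E → ℝ} {x g y : E}
    (h : IsStrongSubgradientOn W σ f x g) (hy : y ∈ W) :
    f x - f y ≤ inner ℝ (x - y) g - σ / 2 * ‖x - y‖ ^ 2 := by
  have := h y hy
  rw [← neg_sub x y, inner_neg_left, norm_neg] at this
  linarith

theorem inner_sub_half_mul_norm_sq_le (x g : E) {σ : ℝ} (hσ : 0 < σ) :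
    inner ℝ x g - σ / 2 * ‖x‖ ^ 2 ≤ ‖g‖ ^ 2 / (2 * σ) := by
  rw [le_div_iff₀ (by positivity)]
  nlinarith [real_inner_le_norm x g, sq_nonneg (σ * ‖x‖ - ‖g‖)]

theorem IsStrongSubgradientOn.half_mul_norm_sq_sub_inner_le {W : Set E} {σ : ℝ} {f : E → ℝ}
    {x y g g' : E} (hx : IsStrongSubgradientOn W σ f x g) (hy : IsStrongSubgradientOn W σ f y g')
    (hxW : x ∈ W) (hyW : y ∈ W) (hσ : 0 < σ) :
    σ / 2 * ‖x - y‖ ^ 2 - inner ℝ (x - y) g ≤ ‖g'‖ ^ 2 / (2 * σ) := by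
  have := (hy.sub_le hxW).trans (inner_sub_half_mul_norm_sq_le _ g' hσ)
  linarith [hx.sub_le hyW]

end StrongSubgradient

section TopK

variable {d : ℕ} {g : ℕ → EuclideanSpace ℝ (Fin d)} {k : ℕ}

theorem topkThresh_nonneg (t : ℕ) : 0 ≤ topkThresh g k t :=
  kthLargest_nonneg (by simp)

theorem topkThresh_le {t : ℕ} {B : ℝ} (hB : 0 ≤ B)
    (h : #{s ∈ range (t + 1) | B < ‖g s‖} ≤ k) : topkThresh g k t ≤ B :=
  kthLargest_le hB (by simpa [List.countP_map, List.countP_range] using h)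

theorem le_topkThresh {t : ℕ} {v : ℝ} (h : k + 1 ≤ #{s ∈ range (t + 1) | v ≤ ‖g s‖}) :
    v ≤ topkThresh g k t :=
  le_kthLargest (by simpa [List.countP_map, List.countP_range] using h)

theorem norm_le_gradMax {S : Finset ℕ} {t : ℕ} (ht : t ∈ S) : ‖g t‖ ≤ gradMax g S :=
  norm_le_coe_sup_nnnorm ht

theorem topkThresh_le_gradMax {S : Finset ℕ} {T t : ℕ} (hS : #(range T \ S) ≤ k) (ht : t < T) :
    topkThresh g k t ≤ gradMax g S := by
  refine topkThresh_le (NNReal.coe_nonneg _) (le_trans (card_le_card fun s hs => ?_) hS)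
  simp only [mem_filter, mem_range] at hs
  exact mem_sdiff.mpr ⟨mem_range.mpr (by omega), fun hsS => (norm_le_gradMax hsS).not_gt hs.2⟩

theorem norm_le_two_mul_gradMax_of_mem_topkPassed {S : Finset ℕ} {T t : ℕ}
    (hS : #(range T \ S) ≤ k) (ht : t ∈ topkPassed g k T) : ‖g t‖ ≤ 2 * gradMax g S := by
  obtain ⟨htT, hpass⟩ := mem_filter.mp ht
  linarith [topkThresh_le_gradMax (g := g) hS (mem_range.mp htT)]

theorem card_le_of_forall_rejected_mem_Ioc {F : Finset ℕ} {c : ℝ}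
    (hF : ∀ t ∈ F, 2 * topkThresh g k t < ‖g t‖ ∧ ‖g t‖ ∈ Set.Ioc c (2 * c)) : #F ≤ k := by
  by_contra! hcard
  have hne : F.Nonempty := card_pos.mp (by omega)
  have hlast := hF _ (F.max'_mem hne)
  have hc : c ≤ topkThresh g k (F.max' hne) := by
    refine le_topkThresh (hcard.trans_le (card_le_card fun s hs => ?_))
    exact mem_filter.mpr ⟨mem_range.mpr (Nat.lt_succ_of_le (F.le_max' s hs)),
      (hF s hs).2.1.le⟩
  linarith [hlast.2.2]

theorem sum_sq_norm_le_of_rejected {R : Finset ℕ} {G : ℝ}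
    (hR : ∀ t ∈ R, 2 * topkThresh g k t < ‖g t‖ ∧ ‖g t‖ ≤ G) :
    ∑ t ∈ R, ‖g t‖ ^ 2 ≤ 4 / 3 * k * G ^ 2 := by
  set ℓ : ℕ → ℕ := fun t => Nat.log 2 ⌊G / ‖g t‖⌋₊
  have hlevel : ∀ t ∈ R, ‖g t‖ ∈ Set.Ioc (G / 2 ^ (ℓ t + 1)) (2 * (G / 2 ^ (ℓ t + 1))) := by
    intro t ht
    have hpos : 0 < ‖g t‖ := by linarith [(hR t ht).1, topkThresh_nonneg (g := g) (k := k) t]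
    obtain ⟨hle, hlt⟩ := two_pow_log_floor_le_and_lt ((one_le_div hpos).mpr (hR t ht).2)
    rw [le_div_iff₀ hpos] at hle
    rw [div_lt_iff₀ hpos] at hlt
    constructor
    · rw [div_lt_iff₀ (by positivity)]; linarith
    · rw [pow_succ, ← div_div, mul_div_cancel₀ _ two_ne_zero, le_div_iff₀ (by positivity)]
      linarith
  have hfiber (i : ℕ) : #{t ∈ R | ℓ t = i} ≤ k := by
    refine card_le_of_forall_rejected_mem_Ioc (g := g) (c := G / 2 ^ (i + 1)) fun t ht => ?_
    obtain ⟨htR, rfl⟩ := mem_filter.mp ht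
    exact ⟨(hR t htR).1, hlevel t htR⟩
  calc ∑ t ∈ R, ‖g t‖ ^ 2 ≤ ∑ t ∈ R, G ^ 2 * (1 / 4) ^ ℓ t := by
        refine sum_le_sum fun t ht => ?_
        have hsq : (2 * (G / 2 ^ (ℓ t + 1))) ^ 2 = G ^ 2 * (1 / 4) ^ ℓ t := by
          rw [one_div_pow, show (4 : ℝ) = 2 ^ 2 by norm_num, ← pow_mul]
          field_simp
          ring
        rw [← hsq]
        exact pow_le_pow_left₀ (norm_nonneg _) (hlevel t ht).2 2
    _ ≤ G ^ 2 * (k / (1 - 1 / 4)) := by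
        rw [← mul_sum]
        exact mul_le_mul_of_nonneg_left
          (sum_pow_le_of_card_fiber_le R ℓ hfiber (by norm_num) (by norm_num)) (sq_nonneg G)
    _ = 4 / 3 * k * G ^ 2 := by ring

theorem sum_sq_norm_sdiff_topkPassed_le {S : Finset ℕ} {T : ℕ} (hS : S ⊆ range T) :
    ∑ t ∈ S \ topkPassed g k T, ‖g t‖ ^ 2 ≤ 4 / 3 * k * gradMax g S ^ 2 := by
  refine sum_sq_norm_le_of_rejected fun t ht => ?_
  obtain ⟨htS, htP⟩ := mem_sdiff.mp ht
  exact ⟨not_le.mp fun h => htP (mem_filter.mpr ⟨hS htS, h⟩), norm_le_gradMax htS⟩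

end TopK

theorem topk_filter_strongly_convex_general
    {d : ℕ} (W : Set (EuclideanSpace ℝ (Fin d)))
    (T k : ℕ) (σ : ℝ) (hσ : 0 < σ)
    (f : ℕ → EuclideanSpace ℝ (Fin d) → ℝ)
    (w : ℕ → EuclideanSpace ℝ (Fin d)) (hw : ∀ t ∈ Finset.range T, w t ∈ W)
    (g : ℕ → EuclideanSpace ℝ (Fin d))
    -- `g t` is a subgradient of the σ-strongly convex `f t` at `w t`:
    (hsubw : ∀ t ∈ Finset.range T, ∀ y ∈ W,
      f t (w t) + (inner ℝ (y - w t) (g t) : ℝ) + σ / 2 * ‖y - w t‖ ^ 2 ≤ f t y)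
    (S : Finset ℕ) (hS : S ⊆ Finset.range T) (hSk : T - S.card ≤ k)
    (u : EuclideanSpace ℝ (Fin d)) (hu : u ∈ W)
    -- `gu t` is a subgradient of `f t` at `u`:
    (gu : ℕ → EuclideanSpace ℝ (Fin d))
    (hsubu : ∀ t ∈ Finset.range T, ∀ y ∈ W,
      f t u + (inner ℝ (y - u) (gu t) : ℝ) + σ / 2 * ‖y - u‖ ^ 2 ≤ f t y)
    -- OGD guarantee with step sizes `1/(σ t)` on the passed rounds:
    (hOGD : ∑ t ∈ topkPassed g k T, (inner ℝ (w t - u) (g t) : ℝ) ≤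
      1 / 2 * ∑ t ∈ topkPassed g k T, ‖g t‖ ^ 2 / (σ * (t + 1))
        + σ / 2 * ∑ t ∈ topkPassed g k T, ‖w t - u‖ ^ 2) :
    ∑ t ∈ S, (f t (w t) - f t u) ≤
      2 * gradMax g S ^ 2 / σ * (Real.log T + 1)
        + 5 * (2 * gradMax g S
            + ((((Finset.range T).filter fun t => ‖g t‖ ≤ 2 * gradMax g S).sup
                fun t => ‖gu t‖₊ : NNReal) : ℝ)) ^ 2 / (2 * σ) * (k + 1) := by
  set G := gradMax g S
  set M := ((((range T).filter fun t => ‖g t‖ ≤ 2 * G).sup fun t => ‖gu t‖₊ : NNReal) : ℝ)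
  set P := topkPassed g k T
  have hPT : P ⊆ range T := filter_subset _ _
  have hcompl : #(range T \ S) ≤ k := by rw [card_sdiff_of_subset hS, card_range]; exact hSk
  have hpassed (t) (ht : t ∈ P) : ‖g t‖ ≤ 2 * G :=
    norm_le_two_mul_gradMax_of_mem_topkPassed hcompl ht
  have hregret (t) (ht : t ∈ range T) :
      f t (w t) - f t u ≤ inner ℝ (w t - u) (g t) - σ / 2 * ‖w t - u‖ ^ 2 :=
    IsStrongSubgradientOn.sub_le (hsubw t ht) hu
  have hsumP : ∑ t ∈ P, (inner ℝ (w t - u) (g t) - σ / 2 * ‖w t - u‖ ^ 2) ≤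
      2 * G ^ 2 / σ * (Real.log T + 1) := by
    rw [sum_sub_distrib, ← mul_sum]
    linear_combination hOGD + 1 / 2 * sum_sq_norm_div_le_log hPT hσ hpassed
  have hPS (t) (ht : t ∈ P \ S) :
      -(inner ℝ (w t - u) (g t) - σ / 2 * ‖w t - u‖ ^ 2) ≤ M ^ 2 / (2 * σ) := by
    obtain ⟨htP, -⟩ := mem_sdiff.mp ht
    have hgu : ‖gu t‖ ≤ M := norm_le_coe_sup_nnnorm (mem_filter.mpr ⟨hPT htP, hpassed t htP⟩)
    rw [neg_sub]
    refine (IsStrongSubgradientOn.half_mul_norm_sq_sub_inner_le (hsubw t (hPT htP))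
      (hsubu t (hPT htP)) (hw t (hPT htP)) hu hσ).trans ?_
    gcongr
  have hSP : ∑ t ∈ S \ P, (f t (w t) - f t u) ≤ 4 / 3 * k * G ^ 2 / (2 * σ) := by
    refine (sum_le_sum fun t ht => (hregret t (hS (mem_sdiff.mp ht).1)).trans
      (inner_sub_half_mul_norm_sq_le _ _ hσ)).trans ?_
    rw [← sum_div]
    gcongr
    exact sum_sq_norm_sdiff_topkPassed_le hS
  have hsplit := sum_le_sum_add_card_mul_add_sum (by positivity)
    (fun t ht => hregret t (hS (mem_inter.mp ht).1)) hPS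
    ((card_le_card (sdiff_subset_sdiff hPT le_rfl)).trans hcompl)
  have hconst : k * (M ^ 2 / (2 * σ)) + 4 / 3 * k * G ^ 2 / (2 * σ) ≤
      5 * (2 * G + M) ^ 2 / (2 * σ) * (k + 1) := by
    have hG : 0 ≤ G := NNReal.coe_nonneg _
    have hM : 0 ≤ M := NNReal.coe_nonneg _
    calc _ = (k * M ^ 2 + 4 / 3 * k * G ^ 2) / (2 * σ) := by ring
      _ ≤ 5 * (2 * G + M) ^ 2 * (k + 1) / (2 * σ) := by
          gcongr
          nlinarith [mul_nonneg (mul_nonneg hG hM) (k.cast_nonneg : (0 : ℝ) ≤ k)]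
      _ = _ := by ring
  linarith

/-- Corollary 2, Strongly Convex Losses. -/
theorem topk_filter_strongly_convex
    {d : ℕ} (W : Set (EuclideanSpace ℝ (Fin d)))
    (hWne : W.Nonempty) (hWcomp : IsCompact W) (hWconv : Convex ℝ W)
    (T k : ℕ) (hT : 1 ≤ T) (σ : ℝ) (hσ : 0 < σ)
    (f : ℕ → EuclideanSpace ℝ (Fin d) → ℝ)
    (hstrong : ∀ t ∈ Finset.range T, StrongConvexOn W σ (f t))
    (w : ℕ → EuclideanSpace ℝ (Fin d)) (hw : ∀ t ∈ Finset.range T, w t ∈ W)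
    (g : ℕ → EuclideanSpace ℝ (Fin d))
    -- `g t` is a subgradient of the σ-strongly convex `f t` at `w t`:
    (hsubw : ∀ t ∈ Finset.range T, ∀ y ∈ W,
      f t (w t) + (inner ℝ (y - w t) (g t) : ℝ) + σ / 2 * ‖y - w t‖ ^ 2 ≤ f t y)
    (S : Finset ℕ) (hS : S ⊆ Finset.range T) (hSk : T - S.card ≤ k)
    (u : EuclideanSpace ℝ (Fin d)) (hu : u ∈ W)
    -- `gu t` is a subgradient of `f t` at `u`:
    (gu : ℕ → EuclideanSpace ℝ (Fin d))
    (hsubu : ∀ t ∈ Finset.range T, ∀ y ∈ W,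
      f t u + (inner ℝ (y - u) (gu t) : ℝ) + σ / 2 * ‖y - u‖ ^ 2 ≤ f t y)
    -- OGD guarantee with step sizes `1/(σ t)` on the passed rounds:
    (hOGD : ∑ t ∈ topkPassed g k T, (inner ℝ (w t - u) (g t) : ℝ) ≤
      1 / 2 * ∑ t ∈ topkPassed g k T, ‖g t‖ ^ 2 / (σ * (t + 1))
        + σ / 2 * ∑ t ∈ topkPassed g k T, ‖w t - u‖ ^ 2) :
    ∑ t ∈ S, (f t (w t) - f t u) ≤
      2 * gradMax g S ^ 2 / σ * (Real.log T + 1)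
        + 5 * (2 * gradMax g S
            + ((((Finset.range T).filter fun t => ‖g t‖ ≤ 2 * gradMax g S).sup
                fun t => ‖gu t‖₊ : NNReal) : ℝ)) ^ 2 / (2 * σ) * (k + 1) :=
  topk_filter_strongly_convex_general W T k σ hσ f w hw g hsubw S hS hSk u hu gu hsubu hOGD
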